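/- Convergence of loopy belief propagation for a finite-state hidden reciprocal model: let C_f and C_b be primitive D×D real matrices with nonnegative entries, with unit-norm strictly positive Perron eigenvectors v_f and w_f respectively (A·v_f = λ_f·v_f, λ_f > 0, and similarly for C_b), and let m ∈ ℝ^D have strictly positive entries. For arbitrary initial vectors u_0, z_0 ∈ ℝ^D with strictly positive entries, define the normalized message iterations u_{n+1} = (C_f·u_n)/‖C_f·u_n‖₁ and z_{n+1} = (C_b·z_n)/‖C_b·z_n‖₁, and the belief sequence b_n = (m ⊙ u_n ⊙ z_n)/‖m ⊙ u_n ⊙ z_n‖₁, where ⊙ is the entrywise (Hadamard) product. Then u_n converges to v_f/‖v_f‖₁, z_n converges to w_f/‖w_f‖₁, and b_n converges to the steady-state belief b = (m ⊙ v_f ⊙ w_f)/‖m ⊙ v_f ⊙ w_f‖₁. -/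

import Mathlib

/-!
Rescaling by the Perron eigenvalue turns each message iteration into the normalized power
iteration of a nonnegative matrix `B` with `B v = v`. For `y = Bⁿ x` the extreme ratios
`max_i y_i / v_i` and `min_i y_i / v_i` are monotone in `n` (Collatz–Wielandt), and because
`Bʰ` is entrywise positive their gap shrinks by a fixed factor `1 - θ < 1` every `h` steps.
Hence both ratios converge to a common `c > 0`, so `Bⁿ x → c v` and the normalized messages
converge to the normalized Perron vectors; the beliefs follow by continuity of the normalized
Hadamard product.
-/

/-- The Euclidean norm on `ℝ^D`. -/
noncomputable def enorm {D : ℕ} (x : Fin D → ℝ) : ℝ :=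
  Real.sqrt (∑ i, x i ^ 2)

/-- The ℓ¹ norm on `ℝ^D`. -/
noncomputable def l1norm {D : ℕ} (x : Fin D → ℝ) : ℝ :=
  ∑ i, |x i|

/-- The entrywise (Hadamard) product of vectors. -/
def hadamard {D : ℕ} (x y : Fin D → ℝ) : Fin D → ℝ :=
  fun i => x i * y i

open Filter Topology
open scoped Matrix

lemma tendsto_zero_of_antitone_of_le_mul_shift {d : ℕ → ℝ} (hd : Antitone d)
    (hd0 : ∀ n, 0 ≤ d n) {h : ℕ} {q : ℝ} (hq : q < 1) (hdq : ∀ n, d (n + h) ≤ q * d n) :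
    Tendsto d atTop (𝓝 0) := by
  obtain ⟨L, hL⟩ : ∃ L, Tendsto d atTop (𝓝 L) :=
    ⟨_, tendsto_atTop_ciInf hd ⟨0, by rintro _ ⟨n, rfl⟩; exact hd0 n⟩⟩
  have hL0 : 0 ≤ L := ge_of_tendsto' hL hd0
  have hLq : L ≤ q * L :=
    le_of_tendsto_of_tendsto' (hL.comp (tendsto_add_atTop_nat h)) (hL.const_mul q) hdq
  obtain rfl : L = 0 := by nlinarith
  exact hL

lemma exists_tendsto_of_monotone_of_antitone {m M : ℕ → ℝ} (hm : Monotone m) (hM : Antitone M)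
    (hmM : ∀ n, m n ≤ M n) (hgap : Tendsto (fun n => M n - m n) atTop (𝓝 0)) :
    ∃ c, Tendsto m atTop (𝓝 c) ∧ Tendsto M atTop (𝓝 c) := by
  have hMc := tendsto_atTop_ciInf hM ⟨m 0, by rintro _ ⟨n, rfl⟩; exact (hm n.zero_le).trans (hmM n)⟩
  exact ⟨_, by simpa using hMc.sub hgap, hMc⟩

section Ratio

variable {ι : Type*} [Fintype ι] [Nonempty ι]

noncomputable def maxRatio (v y : ι → ℝ) : ℝ :=
  Finset.univ.sup' Finset.univ_nonempty fun i => y i / v i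

noncomputable def minRatio (v y : ι → ℝ) : ℝ :=
  Finset.univ.inf' Finset.univ_nonempty fun i => y i / v i

variable {v y : ι → ℝ}

lemma le_maxRatio_mul (hv : ∀ i, 0 < v i) (i : ι) : y i ≤ maxRatio v y * v i :=
  (div_le_iff₀ (hv i)).1 (Finset.le_sup' (fun i => y i / v i) (Finset.mem_univ i))

lemma minRatio_mul_le (hv : ∀ i, 0 < v i) (i : ι) : minRatio v y * v i ≤ y i :=
  (le_div_iff₀ (hv i)).1 (Finset.inf'_le (fun i => y i / v i) (Finset.mem_univ i))

lemma maxRatio_le (hv : ∀ i, 0 < v i) {c : ℝ} (h : ∀ i, y i ≤ c * v i) : maxRatio v y ≤ c :=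
  Finset.sup'_le _ _ fun i _ => (div_le_iff₀ (hv i)).2 (h i)

lemma le_minRatio (hv : ∀ i, 0 < v i) {c : ℝ} (h : ∀ i, c * v i ≤ y i) : c ≤ minRatio v y :=
  Finset.le_inf' _ _ fun i _ => (le_div_iff₀ (hv i)).2 (h i)

lemma minRatio_le_maxRatio : minRatio v y ≤ maxRatio v y :=
  let i := Classical.arbitrary ι
  (Finset.inf'_le _ (Finset.mem_univ i)).trans
    (Finset.le_sup' (fun i => y i / v i) (Finset.mem_univ i))

lemma minRatio_pos (hv : ∀ i, 0 < v i) (hy : ∀ i, 0 < y i) : 0 < minRatio v y :=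
  (Finset.lt_inf'_iff _).2 fun i _ => div_pos (hy i) (hv i)

lemma exists_eq_maxRatio_mul (hv : ∀ i, 0 < v i) : ∃ j, y j = maxRatio v y * v j := by
  obtain ⟨j, -, hj⟩ := Finset.exists_mem_eq_sup' Finset.univ_nonempty fun i => y i / v i
  exact ⟨j, by rw [maxRatio, hj, div_mul_cancel₀ _ (hv j).ne']⟩

end Ratio

section Matrix

variable {ι : Type*} [Fintype ι] {B : Matrix ι ι ℝ} {v : ι → ℝ}

lemma mulVec_le_mulVec_of_nonneg (hB : ∀ i j, 0 ≤ B i j) {x y : ι → ℝ} (hxy : ∀ i, x i ≤ y i)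
    (i : ι) : (B *ᵥ x) i ≤ (B *ᵥ y) i :=
  Finset.sum_le_sum fun j _ => mul_le_mul_of_nonneg_left (hxy j) (hB i j)

lemma pow_mulVec_eq_self [DecidableEq ι] (hBv : B *ᵥ v = v) (n : ℕ) : B ^ n *ᵥ v = v := by
  induction n with
  | zero => rw [pow_zero, Matrix.one_mulVec]
  | succ n ih => rw [pow_succ', ← Matrix.mulVec_mulVec, ih, hBv]

variable [Nonempty ι]

lemma maxRatio_mulVec_le (hB : ∀ i j, 0 ≤ B i j) (hv : ∀ i, 0 < v i) (hBv : B *ᵥ v = v)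
    (y : ι → ℝ) : maxRatio v (B *ᵥ y) ≤ maxRatio v y :=
  maxRatio_le hv fun i => by
    calc (B *ᵥ y) i ≤ (B *ᵥ (maxRatio v y • v)) i :=
          mulVec_le_mulVec_of_nonneg hB (fun j => le_maxRatio_mul hv j) i
      _ = maxRatio v y * v i := by rw [Matrix.mulVec_smul, hBv]; rfl

lemma minRatio_le_minRatio_mulVec (hB : ∀ i j, 0 ≤ B i j) (hv : ∀ i, 0 < v i)
    (hBv : B *ᵥ v = v) (y : ι → ℝ) : minRatio v y ≤ minRatio v (B *ᵥ y) :=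
  le_minRatio hv fun i => by
    calc minRatio v y * v i = (B *ᵥ (minRatio v y • v)) i := by rw [Matrix.mulVec_smul, hBv]; rfl
      _ ≤ (B *ᵥ y) i := mulVec_le_mulVec_of_nonneg hB (fun j => minRatio_mul_le hv j) i

lemma maxRatio_sub_minRatio_mulVec_le (hB : ∀ i j, 0 ≤ B i j) (hv : ∀ i, 0 < v i)
    (hBv : B *ᵥ v = v) {θ : ℝ} (hθ : ∀ i j, θ * v i ≤ B i j * v j) (y : ι → ℝ) :
    maxRatio v (B *ᵥ y) - minRatio v (B *ᵥ y) ≤ (1 - θ) * (maxRatio v y - minRatio v y) := by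
  set M := maxRatio v y
  set m := minRatio v y
  obtain ⟨j, hj⟩ := exists_eq_maxRatio_mul (y := y) hv
  -- `y - m • v` is nonnegative and equals `(M - m) • v` at the maximizing index `j`.
  have hlow : m + θ * (M - m) ≤ minRatio v (B *ᵥ y) := le_minRatio hv fun i => by
    have hgap : (B *ᵥ (y - m • v)) i = (B *ᵥ y) i - m * v i := by
      rw [Matrix.mulVec_sub, Matrix.mulVec_smul, hBv]; rfl
    have hterm : B i j * (y - m • v) j ≤ (B *ᵥ (y - m • v)) i :=
      Finset.single_le_sum (f := fun k => B i k * (y - m • v) k)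
        (fun k _ => mul_nonneg (hB i k) (sub_nonneg.2 (minRatio_mul_le hv k)))
        (Finset.mem_univ j)
    have hyj : (y - m • v) j = (M - m) * v j := by
      simp only [Pi.sub_apply, Pi.smul_apply, smul_eq_mul, hj]; ring
    rw [hgap, hyj] at hterm
    nlinarith [hθ i j, minRatio_le_maxRatio (v := v) (y := y)]
  linarith [maxRatio_mulVec_le hB hv hBv y]

lemma exists_pos_mul_le_mul (hB : ∀ i j, 0 < B i j) (hv : ∀ i, 0 < v i) :
    ∃ θ, 0 < θ ∧ ∀ i j, θ * v i ≤ B i j * v j := by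
  obtain ⟨⟨i₀, j₀⟩, hmin⟩ := Finite.exists_min fun p : ι × ι => B p.1 p.2 * v p.2 / v p.1
  exact ⟨_, div_pos (mul_pos (hB i₀ j₀) (hv j₀)) (hv i₀),
    fun i j => (le_div_iff₀ (hv i)).1 (hmin (i, j))⟩

variable [DecidableEq ι]

lemma minRatio_le_minRatio_pow_mulVec (hB : ∀ i j, 0 ≤ B i j) (hv : ∀ i, 0 < v i)
    (hBv : B *ᵥ v = v) (y : ι → ℝ) (n : ℕ) : minRatio v y ≤ minRatio v (B ^ n *ᵥ y) := by
  induction n with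
  | zero => rw [pow_zero, Matrix.one_mulVec]
  | succ n ih =>
    rw [pow_succ', ← Matrix.mulVec_mulVec]
    exact ih.trans (minRatio_le_minRatio_mulVec hB hv hBv _)

lemma pow_mulVec_pos (hB : ∀ i j, 0 ≤ B i j) (hv : ∀ i, 0 < v i) (hBv : B *ᵥ v = v)
    {x : ι → ℝ} (hx : ∀ i, 0 < x i) (n : ℕ) (i : ι) : 0 < (B ^ n *ᵥ x) i :=
  calc 0 < minRatio v x * v i := mul_pos (minRatio_pos hv hx) (hv i)
    _ ≤ minRatio v (B ^ n *ᵥ x) * v i :=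
      mul_le_mul_of_nonneg_right (minRatio_le_minRatio_pow_mulVec hB hv hBv x n) (hv i).le
    _ ≤ (B ^ n *ᵥ x) i := minRatio_mul_le hv i

theorem exists_tendsto_pow_mulVec (hB : ∀ i j, 0 ≤ B i j) {h : ℕ} (hprim : ∀ i j, 0 < (B ^ h) i j)
    (hv : ∀ i, 0 < v i) (hBv : B *ᵥ v = v) {x : ι → ℝ} (hx : ∀ i, 0 < x i) :
    ∃ c : ℝ, 0 < c ∧ Tendsto (fun n => B ^ n *ᵥ x) atTop (𝓝 (c • v)) := by
  set y : ℕ → ι → ℝ := fun n => B ^ n *ᵥ x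
  have hy_add : ∀ n k, y (n + k) = B ^ k *ᵥ y n := fun n k => by
    simp only [y, Matrix.mulVec_mulVec, pow_add, pow_mul_comm]
  set M := fun n => maxRatio v (y n)
  set m := fun n => minRatio v (y n)
  have hM : Antitone M := antitone_nat_of_succ_le fun n => by
    simpa only [M, hy_add n 1, pow_one] using maxRatio_mulVec_le hB hv hBv (y n)
  have hm : Monotone m := monotone_nat_of_le_succ fun n => by
    simpa only [m, hy_add n 1, pow_one] using minRatio_le_minRatio_mulVec hB hv hBv (y n)
  obtain ⟨θ, hθ, hθB⟩ := exists_pos_mul_le_mul hprim hv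
  have hgap : Tendsto (fun n => M n - m n) atTop (𝓝 0) := by
    refine tendsto_zero_of_antitone_of_le_mul_shift (h := h) (q := 1 - θ) ?_ ?_ (by linarith)
      fun n => ?_
    · exact antitone_nat_of_succ_le fun n => by linarith [hM n.le_succ, hm n.le_succ]
    · exact fun n => sub_nonneg.2 minRatio_le_maxRatio
    · simpa only [M, m, hy_add n h] using maxRatio_sub_minRatio_mulVec_le
        (fun i j => (hprim i j).le) hv (pow_mulVec_eq_self hBv h) hθB (y n)
  obtain ⟨c, hmc, hMc⟩ :=
    exists_tendsto_of_monotone_of_antitone hm hM (fun n => minRatio_le_maxRatio) hgap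
  refine ⟨c, (minRatio_pos hv hx).trans_le ?_, tendsto_pi_nhds.2 fun i => ?_⟩
  · simpa [m, y] using ge_of_tendsto' hmc fun n => hm n.zero_le
  · exact tendsto_of_tendsto_of_tendsto_of_le_of_le (hmc.mul_const (v i)) (hMc.mul_const (v i))
      (fun n => minRatio_mul_le hv i) (fun n => le_maxRatio_mul hv i)

end Matrix

section L1Normalize

variable {D : ℕ}

noncomputable def l1normalize (x : Fin D → ℝ) : Fin D → ℝ :=
  (l1norm x)⁻¹ • x

lemma l1norm_smul_of_nonneg {t : ℝ} (ht : 0 ≤ t) (x : Fin D → ℝ) :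
    l1norm (t • x) = t * l1norm x := by
  simp [l1norm, Finset.mul_sum, abs_mul, abs_of_nonneg ht]

lemma l1normalize_smul {t : ℝ} (ht : 0 < t) (x : Fin D → ℝ) :
    l1normalize (t • x) = l1normalize x := by
  rw [l1normalize, l1normalize, l1norm_smul_of_nonneg ht.le, smul_smul, mul_inv_rev,
    inv_mul_cancel_right₀ ht.ne']

lemma continuous_l1norm : Continuous (l1norm (D := D)) := by
  unfold l1norm
  fun_prop

lemma continuousAt_l1normalize {x : Fin D → ℝ} (hx : l1norm x ≠ 0) :
    ContinuousAt l1normalize x :=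
  (continuous_l1norm.continuousAt.inv₀ hx).smul continuousAt_id

lemma l1normalize_mulVec_l1normalize (A : Matrix (Fin D) (Fin D) ℝ) {x : Fin D → ℝ}
    (hx : 0 < l1norm x) : l1normalize (A *ᵥ l1normalize x) = l1normalize (A *ᵥ x) := by
  rw [show A *ᵥ l1normalize x = (l1norm x)⁻¹ • A *ᵥ x from Matrix.mulVec_smul _ _ _,
    l1normalize_smul (inv_pos.2 hx)]

lemma iterate_eq_l1normalize_pow_mulVec {A : Matrix (Fin D) (Fin D) ℝ} {u : ℕ → Fin D → ℝ}
    (hpos : ∀ n, 0 < l1norm (A ^ n *ᵥ u 0)) (hu : ∀ n, u (n + 1) = l1normalize (A *ᵥ u n))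
    (n : ℕ) : u (n + 1) = l1normalize (A ^ (n + 1) *ᵥ u 0) := by
  induction n with
  | zero => rw [hu, zero_add, pow_one]
  | succ n ih =>
    rw [hu, ih, l1normalize_mulVec_l1normalize A (hpos _), Matrix.mulVec_mulVec, ← pow_succ']

variable [NeZero D]

lemma l1norm_pos {x : Fin D → ℝ} (hx : ∀ i, 0 < x i) : 0 < l1norm x :=
  Finset.sum_pos (fun i _ => abs_pos.2 (hx i).ne') Finset.univ_nonempty

lemma l1normalize_pos {x : Fin D → ℝ} (hx : ∀ i, 0 < x i) (i : Fin D) : 0 < l1normalize x i :=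
  mul_pos (inv_pos.2 (l1norm_pos hx)) (hx i)

theorem tendsto_power_iteration_of_mulVec_eq_self {B : Matrix (Fin D) (Fin D) ℝ}
    (hB : ∀ i j, 0 ≤ B i j) {h : ℕ} (hprim : ∀ i j, 0 < (B ^ h) i j) {v : Fin D → ℝ}
    (hv : ∀ i, 0 < v i) (hBv : B *ᵥ v = v) {u : ℕ → Fin D → ℝ} (hu0 : ∀ i, 0 < u 0 i)
    (hu : ∀ n, u (n + 1) = l1normalize (B *ᵥ u n)) :
    Tendsto u atTop (𝓝 (l1normalize v)) := by
  obtain ⟨c, hc, hlim⟩ := exists_tendsto_pow_mulVec hB hprim hv hBv hu0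
  have hcv : ContinuousAt l1normalize (c • v) :=
    continuousAt_l1normalize (l1norm_pos fun i => mul_pos hc (hv i)).ne'
  have hnorm := hcv.tendsto.comp hlim
  rw [l1normalize_smul hc] at hnorm
  rw [← tendsto_add_atTop_iff_nat 1]
  refine (hnorm.comp (tendsto_add_atTop_nat 1)).congr fun n => ?_
  exact (iterate_eq_l1normalize_pow_mulVec
    (fun n => l1norm_pos (pow_mulVec_pos hB hv hBv hu0 n)) hu n).symm

theorem tendsto_power_iteration {A : Matrix (Fin D) (Fin D) ℝ} (hA : ∀ i j, 0 ≤ A i j) {h : ℕ}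
    (hprim : ∀ i j, 0 < (A ^ h) i j) {v : Fin D → ℝ} (hv : ∀ i, 0 < v i) {r : ℝ} (hr : 0 < r)
    (hAv : A *ᵥ v = r • v) {u : ℕ → Fin D → ℝ} (hu0 : ∀ i, 0 < u 0 i)
    (hu : ∀ n, u (n + 1) = l1normalize (A *ᵥ u n)) :
    Tendsto u atTop (𝓝 (l1normalize v)) := by
  refine tendsto_power_iteration_of_mulVec_eq_self (B := r⁻¹ • A) (h := h)
    (fun i j => mul_nonneg (inv_nonneg.2 hr.le) (hA i j)) (fun i j => ?_) hv ?_ hu0 fun n => ?_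
  · rw [smul_pow]
    exact mul_pos (pow_pos (inv_pos.2 hr) h) (hprim i j)
  · rw [Matrix.smul_mulVec, hAv, smul_smul, inv_mul_cancel₀ hr.ne', one_smul]
  · rw [hu, Matrix.smul_mulVec, l1normalize_smul (inv_pos.2 hr)]

theorem tendsto_l1normalize_hadamard {m x y : Fin D → ℝ} (hm : ∀ i, 0 < m i)
    (hx : ∀ i, 0 < x i) (hy : ∀ i, 0 < y i) {u z : ℕ → Fin D → ℝ}
    (hu : Tendsto u atTop (𝓝 (l1normalize x))) (hz : Tendsto z atTop (𝓝 (l1normalize y))) :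
    Tendsto (fun n => l1normalize (hadamard m (hadamard (u n) (z n)))) atTop
      (𝓝 (l1normalize (hadamard m (hadamard x y)))) := by
  set p := hadamard m (hadamard (l1normalize x) (l1normalize y))
  have hp : p = ((l1norm x)⁻¹ * (l1norm y)⁻¹) • hadamard m (hadamard x y) := by
    ext i
    simp only [p, hadamard, l1normalize, Pi.smul_apply, smul_eq_mul]
    ring
  have hlim : Tendsto (fun n => hadamard m (hadamard (u n) (z n))) atTop (𝓝 p) :=
    tendsto_const_nhds.mul (hu.mul hz)
  have hcont : ContinuousAt l1normalize p := continuousAt_l1normalize (l1norm_pos fun i =>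
    mul_pos (hm i) (mul_pos (l1normalize_pos hx i) (l1normalize_pos hy i))).ne'
  rw [← l1normalize_smul (mul_pos (inv_pos.2 (l1norm_pos hx)) (inv_pos.2 (l1norm_pos hy))), ← hp]
  exact hcont.tendsto.comp hlim

end L1Normalize

theorem loopy_BP_convergence_hidden_reciprocal_model_general
    (D : ℕ) (hD : 1 ≤ D)
    (Cf Cb : Matrix (Fin D) (Fin D) ℝ)
    (hCf : ∀ i j, 0 ≤ Cf i j) (hCb : ∀ i j, 0 ≤ Cb i j)
    (hf : ℕ) (hCfprim : ∀ i j, 0 < (Cf ^ hf) i j)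
    (hb : ℕ) (hCbprim : ∀ i j, 0 < (Cb ^ hb) i j)
    (vf wf : Fin D → ℝ) (lf lb : ℝ)
    (hvf : ∀ i, 0 < vf i) (hlf : 0 < lf)
    (hvfeig : Cf.mulVec vf = lf • vf)
    (hwf : ∀ i, 0 < wf i) (hlb : 0 < lb)
    (hwfeig : Cb.mulVec wf = lb • wf)
    (m : Fin D → ℝ) (hm : ∀ i, 0 < m i)
    (u0 z0 : Fin D → ℝ) (hu0 : ∀ i, 0 < u0 i) (hz0 : ∀ i, 0 < z0 i)
    (u z : ℕ → Fin D → ℝ)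
    (hu_init : u 0 = u0)
    (hu_rec : ∀ n, u (n + 1) = (l1norm (Cf.mulVec (u n)))⁻¹ • Cf.mulVec (u n))
    (hz_init : z 0 = z0)
    (hz_rec : ∀ n, z (n + 1) = (l1norm (Cb.mulVec (z n)))⁻¹ • Cb.mulVec (z n))
    (b : ℕ → Fin D → ℝ)
    (hb_def : ∀ n, b n =
      (l1norm (hadamard m (hadamard (u n) (z n))))⁻¹ • hadamard m (hadamard (u n) (z n))) :
    Filter.Tendsto u Filter.atTop (nhds ((l1norm vf)⁻¹ • vf)) ∧
    Filter.Tendsto z Filter.atTop (nhds ((l1norm wf)⁻¹ • wf)) ∧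
    Filter.Tendsto b Filter.atTop
      (nhds ((l1norm (hadamard m (hadamard vf wf)))⁻¹ • hadamard m (hadamard vf wf))) := by
  have : NeZero D := ⟨by omega⟩
  have hu : Tendsto u atTop (𝓝 (l1normalize vf)) :=
    tendsto_power_iteration hCf hCfprim hvf hlf hvfeig (hu_init ▸ hu0) hu_rec
  have hz : Tendsto z atTop (𝓝 (l1normalize wf)) :=
    tendsto_power_iteration hCb hCbprim hwf hlb hwfeig (hz_init ▸ hz0) hz_rec
  refine ⟨hu, hz, ?_⟩
  rw [show b = fun n => l1normalize (hadamard m (hadamard (u n) (z n))) from funext hb_def]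
  exact tendsto_l1normalize_hadamard hm hvf hwf hu hz

/-- Convergence of loopy belief propagation for a finite-state hidden reciprocal model:
the normalized forward and backward message iterations driven by the primitive
nonnegative matrices `C_f` and `C_b` converge to the (ℓ¹-normalized) Perron
eigenvectors `v_f`, `w_f`, and the beliefs converge to the steady-state belief
`(m ⊙ v_f ⊙ w_f)/‖m ⊙ v_f ⊙ w_f‖₁`. -/
theorem loopy_BP_convergence_hidden_reciprocal_model
    (D : ℕ) (hD : 1 ≤ D)
    (Cf Cb : Matrix (Fin D) (Fin D) ℝ)
    (hCf : ∀ i j, 0 ≤ Cf i j) (hCb : ∀ i j, 0 ≤ Cb i j)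
    (hf : ℕ) (hhf : 0 < hf) (hCfprim : ∀ i j, 0 < (Cf ^ hf) i j)
    (hb : ℕ) (hhb : 0 < hb) (hCbprim : ∀ i j, 0 < (Cb ^ hb) i j)
    (vf wf : Fin D → ℝ) (lf lb : ℝ)
    (hvf : ∀ i, 0 < vf i) (hvfnorm : _root_.enorm vf = 1) (hlf : 0 < lf)
    (hvfeig : Cf.mulVec vf = lf • vf)
    (hwf : ∀ i, 0 < wf i) (hwfnorm : _root_.enorm wf = 1) (hlb : 0 < lb)
    (hwfeig : Cb.mulVec wf = lb • wf)
    (m : Fin D → ℝ) (hm : ∀ i, 0 < m i)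
    (u0 z0 : Fin D → ℝ) (hu0 : ∀ i, 0 < u0 i) (hz0 : ∀ i, 0 < z0 i)
    (u z : ℕ → Fin D → ℝ)
    (hu_init : u 0 = u0)
    (hu_rec : ∀ n, u (n + 1) = (l1norm (Cf.mulVec (u n)))⁻¹ • Cf.mulVec (u n))
    (hz_init : z 0 = z0)
    (hz_rec : ∀ n, z (n + 1) = (l1norm (Cb.mulVec (z n)))⁻¹ • Cb.mulVec (z n))
    (b : ℕ → Fin D → ℝ)
    (hb_def : ∀ n, b n =
      (l1norm (hadamard m (hadamard (u n) (z n))))⁻¹ • hadamard m (hadamard (u n) (z n))) :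
    Filter.Tendsto u Filter.atTop (nhds ((l1norm vf)⁻¹ • vf)) ∧
    Filter.Tendsto z Filter.atTop (nhds ((l1norm wf)⁻¹ • wf)) ∧
    Filter.Tendsto b Filter.atTop
      (nhds ((l1norm (hadamard m (hadamard vf wf)))⁻¹ • hadamard m (hadamard vf wf))) :=
  loopy_BP_convergence_hidden_reciprocal_model_general D hD Cf Cb hCf hCb hf hCfprim hb hCbprim vf
    wf lf lb hvf hlf hvfeig hwf hlb hwfeig m hm u0 z0 hu0 hz0 u z hu_init hu_rec hz_init hz_rec b
    hb_def
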